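/- For every integer s ≥ 0 and every integer k lying in I_s (i.e. 2^(Q(s)) ≤ k < 2^(Q(s)) + Q(s+1) − Q(s) + Ξ), one has N(k) = k − (2^(Q(s)) − 1) + Q(s) + Ξ·s and B(k) = 2s + 1. -/

import Mathlib

open scoped Classical ENNReal
open Real Set Filter

/-- The quadratic function `Q(s) = q·s²`. -/
noncomputable def Qf (q : ℤ) (s : ℝ) : ℝ := (q : ℝ) * s ^ 2

/-- The half-open interval `I_s = [2^(Q(s)), 2^(Q(s)) + Q(s+1) − Q(s) + Ξ)`. -/
noncomputable def Iset (q Ξ : ℤ) (s : ℝ) : Set ℝ :=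
  Set.Ico ((2 : ℝ) ^ (Qf q s)) ((2 : ℝ) ^ (Qf q s) + Qf q (s + 1) - Qf q s + (Ξ : ℝ))

/-- The half-open interval `J_s = [2^(Q(s)) + Q(s+1) − Q(s) + Ξ, 2^(Q(s+1)))`. -/
noncomputable def Jset (q Ξ : ℤ) (s : ℝ) : Set ℝ :=
  Set.Ico ((2 : ℝ) ^ (Qf q s) + Qf q (s + 1) - Qf q s + (Ξ : ℝ)) ((2 : ℝ) ^ (Qf q (s + 1)))

/-- The sequence `(x_j)` in `{0,1}`: `x_j = 0` iff `j + 1 ∈ I_s` for some integer `s ≥ 0`. -/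
noncomputable def xseq (q Ξ : ℤ) (j : ℕ) : ℕ :=
  if ∃ s : ℕ, ((j : ℝ) + 1) ∈ Iset q Ξ (s : ℝ) then 0 else 1

/-- `N(k) = #{ j ∈ {0,…,k−1} : x_j = 0 }`, with `N(0) = 0`. -/
noncomputable def Nf (q Ξ : ℤ) (k : ℕ) : ℕ :=
  ((Finset.range k).filter (fun j => xseq q Ξ j = 0)).card

/-- `B(0) = 0`, `B(1) = 1`, and for `k ≥ 2`,
`B(k) = 1 + #{ j ∈ {0,…,k−2} : x_j ≠ x_{j+1} }`. -/
noncomputable def Bf (q Ξ : ℤ) (k : ℕ) : ℕ :=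
  if k = 0 then 0
  else 1 + ((Finset.range (k - 1)).filter (fun j => xseq q Ξ j ≠ xseq q Ξ (j + 1))).card

/-- The length `|J_s| = 2^(Q(s+1)) − 2^(Q(s)) − (Q(s+1) − Q(s) + Ξ)` of `J_s`. -/
noncomputable def Jlen (q Ξ : ℤ) (s : ℝ) : ℝ :=
  (2 : ℝ) ^ (Qf q (s + 1)) - (2 : ℝ) ^ (Qf q s) - (Qf q (s + 1) - Qf q s + (Ξ : ℝ))

/-- `λ(s) = 1/|J_s|`. -/
noncomputable def lamf (q Ξ : ℤ) (s : ℝ) : ℝ := 1 / Jlen q Ξ s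

/-- The two-variable series `Π(τ,λ) = Σ_{k≥0} 2^(−λk − τ·N(k) + τ·ξ·B(k))`, a sum in `[0,∞]`. -/
noncomputable def Pi2 (q Ξ : ℤ) (ξ τ lam : ℝ) : ℝ≥0∞ :=
  ∑' k : ℕ, ENNReal.ofReal
    ((2 : ℝ) ^ (-lam * (k : ℝ) - τ * (Nf q Ξ k : ℝ) + τ * ξ * (Bf q Ξ k : ℝ)))

/-! Write `q = n`. The block `I_s` consists of the integers in
`[2^(n s²), 2^(n s²) + n(2s+1) + Ξ)`, and `2^(n-1) ≥ n + 1 + Ξ` makes it end strictly before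
`I_(s+1)` begins, so the blocks are disjoint and separated by the nonempty gaps `J_s`;
`x_j = 0` exactly when `j + 1` lies in a block. Passing from `2^Q(s)` to `2^Q(s+1)` therefore
adds the length `n(2s+1) + Ξ` of `I_s` to `N` and the two value changes at the ends of `J_s`
to `B`, whence `N(2^Q(s)) = Q(s) + Ξ s + 1` and `B(2^Q(s)) = 2s + 1`; inside `I_s`, `N` grows
by one per step and `B` is constant. -/

section Counting

variable {q Ξ : ℤ}

lemma Nf_succ (k : ℕ) :
    Nf q Ξ (k + 1) = Nf q Ξ k + if xseq q Ξ k = 0 then 1 else 0 := by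
  rw [Nf, Nf, Finset.range_add_one, Finset.filter_insert]
  split_ifs
  · rw [Finset.card_insert_of_notMem (by simp)]
  · rfl

lemma Bf_succ {k : ℕ} (hk : 1 ≤ k) :
    Bf q Ξ (k + 1) = Bf q Ξ k + if xseq q Ξ (k - 1) = xseq q Ξ k then 0 else 1 := by
  obtain ⟨m, rfl⟩ : ∃ m, k = m + 1 := ⟨k - 1, by omega⟩
  simp only [Bf, Nat.add_one_ne_zero, if_false, Nat.add_sub_cancel, Finset.range_add_one,
    Finset.filter_insert]
  by_cases h : xseq q Ξ m = xseq q Ξ (m + 1)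
  · simp [h]
  · rw [if_pos h, if_neg h, Finset.card_insert_of_notMem (by simp)]
    omega

lemma Nf_add_of_forall_eq_zero {m n : ℕ} (hmn : m ≤ n)
    (h : ∀ j, m ≤ j → j < n → xseq q Ξ j = 0) : Nf q Ξ n = Nf q Ξ m + (n - m) := by
  induction n, hmn using Nat.le_induction with
  | base => simp
  | succ n hmn ih =>
    rw [Nf_succ, if_pos (h n hmn n.lt_succ_self), ih fun j hj hjn => h j hj (by omega)]
    omega

lemma Nf_eq_of_forall_ne_zero {m n : ℕ} (hmn : m ≤ n)
    (h : ∀ j, m ≤ j → j < n → xseq q Ξ j ≠ 0) : Nf q Ξ n = Nf q Ξ m := by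
  induction n, hmn using Nat.le_induction with
  | base => rfl
  | succ n hmn ih =>
    rw [Nf_succ, if_neg (h n hmn n.lt_succ_self), ih fun j hj hjn => h j hj (by omega),
      add_zero]

lemma Bf_eq_of_forall_eq {m n : ℕ} {c : ℕ} (hm : 1 ≤ m) (hmn : m ≤ n)
    (h : ∀ j, m - 1 ≤ j → j < n → xseq q Ξ j = c) : Bf q Ξ n = Bf q Ξ m := by
  induction n, hmn using Nat.le_induction with
  | base => rfl
  | succ n hmn ih =>
    rw [Bf_succ (by omega), h (n - 1) (by omega) (by omega), h n (by omega) (by omega),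
      ih fun j hj hjn => h j hj (by omega)]
    simp

end Counting

/-- `2 ^ Q(s)` for `q = n`. -/
def blockStart (n s : ℕ) : ℕ := 2 ^ (n * s ^ 2)

/-- `Q(s+1) - Q(s) + Ξ` for `q = n`, the length of `I_s`. -/
def blockLen (n : ℕ) (Ξ : ℤ) (s : ℕ) : ℕ := ((n : ℤ) * (2 * s + 1) + Ξ).toNat

section Blocks

variable {n : ℕ} {Ξ : ℤ}

lemma blockStart_mono : Monotone (blockStart n) := fun _ _ h =>
  Nat.pow_le_pow_right two_pos (Nat.mul_le_mul_left _ (Nat.pow_le_pow_left h 2))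

lemma blockLen_cast (hnΞ : 1 ≤ (n : ℤ) + Ξ) (s : ℕ) :
    (blockLen n Ξ s : ℤ) = n * (2 * s + 1) + Ξ :=
  Int.toNat_of_nonneg (by nlinarith [s.cast_nonneg (α := ℤ), n.cast_nonneg (α := ℤ)])

lemma one_le_blockLen (hnΞ : 1 ≤ (n : ℤ) + Ξ) (s : ℕ) : 1 ≤ blockLen n Ξ s := by
  have : (1 : ℤ) ≤ blockLen n Ξ s := by
    rw [blockLen_cast hnΞ]
    nlinarith [s.cast_nonneg (α := ℤ), n.cast_nonneg (α := ℤ)]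
  exact_mod_cast this

/-- The gap `J_s` is nonempty. -/
lemma blockStart_add_blockLen_lt (hn : 1 ≤ n) (hpow : (n : ℤ) + 1 + Ξ ≤ 2 ^ (n - 1))
    (s : ℕ) :
    blockStart n s + blockLen n Ξ s < blockStart n (s + 1) := by
  obtain ⟨m, rfl⟩ : ∃ m, n = m + 1 := ⟨n - 1, by omega⟩
  have hlen : blockLen (m + 1) Ξ s + 2 ≤ 2 ^ m + (2 * (m + 1) * s + 1) := by
    simp only [Nat.add_sub_cancel] at hpow
    zify
    rw [blockLen, Int.toNat_eq_max]
    push_cast at hpow ⊢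
    have h2m : (1 : ℤ) ≤ 2 ^ m := one_le_pow₀ one_le_two
    have hms : (0 : ℤ) ≤ 2 * (m + 1) * s := by positivity
    rw [← max_add_add_right]
    exact max_le (by linarith) (by linarith)
  have hsplit : blockStart (m + 1) (s + 1) =
      blockStart (m + 1) s * (2 ^ m * 2 ^ (2 * (m + 1) * s) * 2) := by
    simp only [blockStart, ← pow_succ, ← pow_add]
    ring_nf
  have hA : 1 ≤ blockStart (m + 1) s := Nat.one_le_two_pow
  have hu : 1 ≤ 2 ^ m := Nat.one_le_two_pow
  have hv : 2 * (m + 1) * s + 1 ≤ 2 ^ (2 * (m + 1) * s) := Nat.lt_two_pow_self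
  have huv : 2 ^ m + 2 ^ (2 * (m + 1) * s) ≤ 2 ^ m * 2 ^ (2 * (m + 1) * s) + 1 := by
    have hv1 : 1 ≤ 2 ^ (2 * (m + 1) * s) := Nat.one_le_two_pow
    zify at hu hv1 ⊢
    nlinarith [mul_nonneg (sub_nonneg.2 hu) (sub_nonneg.2 hv1)]
  -- `A + |I_s| < A + u v ≤ 2 A u v` with `A = 2^Q(s)`, `u = 2^(n-1)`, `v = 2^(2ns)`
  rw [hsplit]
  nlinarith [Nat.mul_le_mul hA (Nat.mul_le_mul hu hv), Nat.mul_le_mul hu hv]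

lemma blockStart_add_blockLen_le (hn : 1 ≤ n) (hpow : (n : ℤ) + 1 + Ξ ≤ 2 ^ (n - 1))
    {s t : ℕ} (h : s < t) : blockStart n s + blockLen n Ξ s ≤ blockStart n t :=
  (blockStart_add_blockLen_lt hn hpow s).le.trans (blockStart_mono h)

lemma two_rpow_Qf (s : ℕ) : (2 : ℝ) ^ Qf n s = blockStart n s := by
  have hexp : ((n : ℤ) : ℝ) * (s : ℝ) ^ 2 = ((n * s ^ 2 : ℕ) : ℝ) := by push_cast; rfl
  rw [Qf, hexp, Real.rpow_natCast, blockStart]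
  push_cast
  rfl

lemma natCast_mem_Iset_iff (hnΞ : 1 ≤ (n : ℤ) + Ξ) (s k : ℕ) :
    (k : ℝ) ∈ Iset n Ξ s ↔
      blockStart n s ≤ k ∧ k < blockStart n s + blockLen n Ξ s := by
  have hlen : Qf n (s + 1) - Qf n s + Ξ = blockLen n Ξ s := by
    have hcast := congrArg (Int.cast (R := ℝ)) (blockLen_cast hnΞ s)
    push_cast at hcast
    rw [hcast, Qf, Qf]
    push_cast
    ring
  rw [Iset, add_sub_assoc, add_assoc, hlen, two_rpow_Qf, Set.mem_Ico]
  norm_cast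

lemma xseq_eq_zero_of_mem (hnΞ : 1 ≤ (n : ℤ) + Ξ) {s j : ℕ}
    (h₁ : blockStart n s ≤ j + 1) (h₂ : j + 1 < blockStart n s + blockLen n Ξ s) : xseq n Ξ j = 0 :=
  if_pos ⟨s, by exact_mod_cast (natCast_mem_Iset_iff hnΞ s (j + 1)).2 ⟨h₁, h₂⟩⟩

lemma xseq_eq_one_of_mem_gap (hn : 1 ≤ n) (hnΞ : 1 ≤ (n : ℤ) + Ξ)
    (hpow : (n : ℤ) + 1 + Ξ ≤ 2 ^ (n - 1)) {s j : ℕ}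
    (h₁ : blockStart n s + blockLen n Ξ s ≤ j + 1) (h₂ : j + 1 < blockStart n (s + 1)) :
    xseq n Ξ j = 1 := by
  refine if_neg ?_
  rintro ⟨t, ht⟩
  rw [← Nat.cast_succ, natCast_mem_Iset_iff hnΞ] at ht
  rcases lt_trichotomy t s with hts | rfl | hst
  · have := blockStart_add_blockLen_le hn hpow hts
    omega
  · omega
  · have : blockStart n (s + 1) ≤ blockStart n t := blockStart_mono hst
    omega

lemma Nf_Bf_of_mem_block (hnΞ : 1 ≤ (n : ℤ) + Ξ) {s k : ℕ} (h₁ : blockStart n s ≤ k)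
    (h₂ : k < blockStart n s + blockLen n Ξ s) :
    Nf n Ξ k = Nf n Ξ (blockStart n s) + (k - blockStart n s) ∧
      Bf n Ξ k = Bf n Ξ (blockStart n s) := by
  have hP : 1 ≤ blockStart n s := Nat.one_le_two_pow
  have hzero : ∀ j, blockStart n s ≤ j + 1 → j < k → xseq n Ξ j = 0 :=
    fun j hj hjk => xseq_eq_zero_of_mem hnΞ hj (by omega)
  exact ⟨Nf_add_of_forall_eq_zero h₁ fun j hj hjk => hzero j (by omega) hjk,
    Bf_eq_of_forall_eq hP h₁ fun j hj hjk => hzero j (by omega) hjk⟩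

lemma Nf_Bf_blockStart_succ (hn : 1 ≤ n) (hnΞ : 1 ≤ (n : ℤ) + Ξ)
    (hpow : (n : ℤ) + 1 + Ξ ≤ 2 ^ (n - 1)) (s : ℕ) :
    Nf n Ξ (blockStart n (s + 1)) = Nf n Ξ (blockStart n s) + blockLen n Ξ s ∧
      Bf n Ξ (blockStart n (s + 1)) = Bf n Ξ (blockStart n s) + 2 := by
  set P := blockStart n s with hPdef
  set a := P + blockLen n Ξ s
  set b := blockStart n (s + 1)
  have hP : 1 ≤ P := Nat.one_le_two_pow
  have hD : 1 ≤ blockLen n Ξ s := one_le_blockLen hnΞ s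
  have hab : a < b := blockStart_add_blockLen_lt hn hpow s
  have hzero : ∀ j, P ≤ j + 1 → j + 1 < a → xseq n Ξ j = 0 :=
    fun j => xseq_eq_zero_of_mem hnΞ
  have hone : ∀ j, a ≤ j + 1 → j + 1 < b → xseq n Ξ j = 1 :=
    fun j => xseq_eq_one_of_mem_gap hn hnΞ hpow
  have hb : xseq n Ξ (b - 1) = 0 := by
    have := one_le_blockLen hnΞ (s + 1)
    exact xseq_eq_zero_of_mem hnΞ (s := s + 1) (by omega) (by omega)
  obtain ⟨hNblock, hBblock⟩ :=
    Nf_Bf_of_mem_block hnΞ (s := s) (k := a - 1) (by omega) (by omega)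
  have hNgap : Nf n Ξ (b - 1) = Nf n Ξ (a - 1) :=
    Nf_eq_of_forall_ne_zero (by omega) fun j hj hjb => by rw [hone j (by omega) (by omega)]; simp
  have hBgap : Bf n Ξ (b - 1) = Bf n Ξ a :=
    Bf_eq_of_forall_eq (by omega) (by omega) fun j hj hjb => hone j (by omega) (by omega)
  have hNb := Nf_succ (q := n) (Ξ := Ξ) (b - 1)
  have hBa := Bf_succ (q := n) (Ξ := Ξ) (k := a - 1) (by omega)
  have hBb := Bf_succ (q := n) (Ξ := Ξ) (k := b - 1) (by omega)
  rw [Nat.sub_add_cancel (by omega), hb] at hNb hBb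
  rw [Nat.sub_add_cancel (by omega), hzero (a - 1 - 1) (by omega) (by omega),
    hone (a - 1) (by omega) (by omega)] at hBa
  rw [hone (b - 1 - 1) (by omega) (by omega)] at hBb
  rw [← hPdef] at hNblock hBblock
  simp only [↓reduceIte, zero_ne_one, one_ne_zero] at hNb hBa hBb
  omega

lemma Nf_Bf_blockStart (hn : 1 ≤ n) (hnΞ : 1 ≤ (n : ℤ) + Ξ)
    (hpow : (n : ℤ) + 1 + Ξ ≤ 2 ^ (n - 1)) (s : ℕ) :
    (Nf n Ξ (blockStart n s) : ℤ) = n * s ^ 2 + Ξ * s + 1 ∧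
      Bf n Ξ (blockStart n s) = 2 * s + 1 := by
  induction s with
  | zero =>
    have h₀ : blockStart n 0 = 1 := by simp [blockStart]
    have hx : xseq n Ξ 0 = 0 :=
      xseq_eq_zero_of_mem hnΞ (s := 0) (by omega) (by have := one_le_blockLen hnΞ 0; omega)
    rw [h₀, Nf_succ, if_pos hx]
    simp [Nf, Bf]
  | succ s ih =>
    obtain ⟨hN, hB⟩ := Nf_Bf_blockStart_succ hn hnΞ hpow s
    refine ⟨?_, by omega⟩
    rw [hN, Nat.cast_add, ih.1, blockLen_cast hnΞ]
    push_cast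
    ring

end Blocks

theorem stmt3 (Ξ q : ℤ) (hq : 3 ≤ q) (hqΞ : 1 ≤ q + Ξ)
    (hpow : (q : ℝ) + 1 + (Ξ : ℝ) ≤ (2 : ℝ) ^ ((q : ℝ) - 1)) :
    ∀ s : ℕ, ∀ k : ℕ, (k : ℝ) ∈ Iset q Ξ (s : ℝ) →
      (Nf q Ξ k : ℝ) = (k : ℝ) - ((2 : ℝ) ^ (Qf q (s : ℝ)) - 1)
          + Qf q (s : ℝ) + (Ξ : ℝ) * (s : ℝ) ∧
      Bf q Ξ k = 2 * s + 1 := by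
  obtain ⟨n, rfl⟩ := Int.eq_ofNat_of_zero_le (by omega : 0 ≤ q)
  have hn : 1 ≤ n := by omega
  have hpowℤ : (n : ℤ) + 1 + Ξ ≤ 2 ^ (n - 1) := by
    rw [show ((n : ℤ) : ℝ) - 1 = ((n - 1 : ℕ) : ℝ) by push_cast [hn]; rfl,
      Real.rpow_natCast] at hpow
    exact_mod_cast hpow
  intro s k hk
  obtain ⟨h₁, h₂⟩ := (natCast_mem_Iset_iff hqΞ s k).1 hk
  obtain ⟨hNk, hBk⟩ := Nf_Bf_of_mem_block hqΞ h₁ h₂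
  obtain ⟨hNP, hBP⟩ := Nf_Bf_blockStart hn hqΞ hpowℤ s
  refine ⟨?_, hBk.trans hBP⟩
  have hNkℤ : (Nf n Ξ k : ℤ) = k - blockStart n s + (n * s ^ 2 + Ξ * s + 1) := by
    rw [hNk, Nat.cast_add, hNP, Nat.cast_sub h₁]
    ring
  have hNkℝ := congrArg (Int.cast (R := ℝ)) hNkℤ
  push_cast at hNkℝ
  rw [hNkℝ, two_rpow_Qf, Qf]
  push_cast
  ring
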